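/- arXiv:2101.11419 — 2 statements merged into one kernel-verified Lean document; each statement's English description precedes it below -/
import Mathlib

section
/- If Y is an admissible monomial of degree 18 in P_5, then the weight vector ω(Y) is one of the following six sequences (followed by zeros): (2,2,1,1), (2,2,3), (2,4,2), (4,1,1,1), (4,1,3), (4,3,2). -/
open MvPolynomial

noncomputable section

/-- `P m` is the polynomial algebra `F₂[x₁, …, x_m]`. -/
abbrev P (m : ℕ) := MvPolynomial (Fin m) (ZMod 2)

/-- The total Steenrod square, the `F₂`-algebra endomorphism with `x_j ↦ x_j + x_j²`. -/
def Sq (m : ℕ) : P m →ₐ[ZMod 2] P m :=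
  MvPolynomial.aeval (fun j => X j + X j ^ 2)

/-- `f` is hit (in degree `n`): `f = ∑_{k ≥ 1} Sq^k(g_k)` with `g_k` homogeneous of
degree `n - k`; here `Sq^k(g_k)` is the degree-`n` homogeneous component of `Sq(g_k)`. -/
def IsHit (m n : ℕ) (f : P m) : Prop :=
  ∃ g : ℕ → P m, (∀ k, (g k).IsHomogeneous (n - k)) ∧
    f = ∑ k ∈ Finset.Icc 1 n, MvPolynomial.homogeneousComponent n (Sq m (g k))

/-- The subspace of hit polynomials of degree `n`. -/
def hitSubmodule (m n : ℕ) : Submodule (ZMod 2) (P m) :=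
  Submodule.span (ZMod 2) {f | f.IsHomogeneous n ∧ IsHit m n f}

/-- `Q^{⊗m}_n`: the quotient of the degree-`n` homogeneous component of `P m` by hit
polynomials. -/
abbrev QQ (m n : ℕ) :=
  (homogeneousSubmodule (Fin m) (ZMod 2) n) ⧸
    ((hitSubmodule m n).comap (homogeneousSubmodule (Fin m) (ZMod 2) n).subtype)

/-- The class in `Q^{⊗m}_n` of (the degree-`n` part of) a polynomial `f`. -/
def qClass (m n : ℕ) (f : P m) : QQ m n :=
  Submodule.Quotient.mk
    ⟨MvPolynomial.homogeneousComponent n f,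
      (mem_homogeneousSubmodule n _).mpr (homogeneousComponent_isHomogeneous n f)⟩

/-- The monomial `x₁^{u 1} ⋯ x_m^{u m}`. -/
def mono (m : ℕ) (u : Fin m → ℕ) : P m :=
  MvPolynomial.monomial (Finsupp.equivFunOnFinite.symm u) 1

/-- Total degree of the exponent vector `u`. -/
def degOf (m : ℕ) (u : Fin m → ℕ) : ℕ := ∑ j, u j

/-- The weight vector of the monomial with exponent vector `u`
(indexed from `0`):  `wt m u t = ∑_j α_t(u_j)`. -/
def wt (m : ℕ) (u : Fin m → ℕ) : ℕ → ℕ := fun t => ∑ j, (u j / 2 ^ t) % 2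

/-- Left-lexicographic strict order on weight vectors. -/
def lexLt (a b : ℕ → ℕ) : Prop := ∃ t, a t < b t ∧ ∀ s < t, a s = b s

/-- Left-lexicographic strict order on exponent vectors. -/
def lexLtFin {m : ℕ} (a b : Fin m → ℕ) : Prop := ∃ t, a t < b t ∧ ∀ s < t, a s = b s

/-- The order on monomials of the same degree: first by weight vectors, then by
exponent vectors, both left-lexicographically. -/
def monoLt (m : ℕ) (u v : Fin m → ℕ) : Prop :=
  lexLt (wt m u) (wt m v) ∨ (wt m u = wt m v ∧ lexLtFin u v)

/-- A monomial (of degree `n`) is inadmissible if it is congruent, modulo hit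
polynomials, to a sum of strictly smaller monomials of the same degree. -/
def Inadmissible (m n : ℕ) (u : Fin m → ℕ) : Prop :=
  ∃ S : Finset (Fin m → ℕ), (∀ v ∈ S, degOf m v = n ∧ monoLt m v u) ∧
    IsHit m n (mono m u - ∑ v ∈ S, mono m v)

/-- An admissible monomial of degree `n`. -/
def Admissible (m n : ℕ) (u : Fin m → ℕ) : Prop :=
  degOf m u = n ∧ ¬ Inadmissible m n u

/-- The weight vector given by a finite list (followed by zeros). -/
def wvec (l : List ℕ) : ℕ → ℕ := fun t => l.getD t 0

/-- The linear substitution action of a matrix `g` on `P m`: `x_i ↦ ∑_j g_{ij} x_j`. -/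
def act (m : ℕ) (g : Matrix (Fin m) (Fin m) (ZMod 2)) : P m →ₐ[ZMod 2] P m :=
  MvPolynomial.aeval (fun i => ∑ j, MvPolynomial.C (g i j) * X j)

/-- `P_m^{<ω}` in degree `n`: span of monomials of degree `n` with weight vector `< ω`. -/
def belowSubmodule (m n : ℕ) (w : ℕ → ℕ) : Submodule (ZMod 2) (P m) :=
  Submodule.span (ZMod 2)
    {f | ∃ u : Fin m → ℕ, degOf m u = n ∧ lexLt (wt m u) w ∧ f = mono m u}

/-- `P_m^{≤ω}` in degree `n`: span of monomials of degree `n` with weight vector `≤ ω`. -/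
def leSubmodule (m n : ℕ) (w : ℕ → ℕ) : Submodule (ZMod 2) (P m) :=
  Submodule.span (ZMod 2)
    {f | ∃ u : Fin m → ℕ, degOf m u = n ∧ (lexLt (wt m u) w ∨ wt m u = w) ∧ f = mono m u}

end

/-!
By the Cartan formula, `Sq^k(x^g)` is the sum of the monomials `x^(g+s)` over the exponent
vectors `s` of degree `k` for which every binomial coefficient `C(g_j, s_j)` is odd. By Lucas'
theorem the binary digits of such an `s` are among those of `g`, so that
`ω_1(x^(g+s)) + ω_1(x^s) = ω_1(x^g)`, and likewise for `ω_2` when `s` is even; this makes the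
terms of `Sq^k(x^g)` easy to compare in the weight order.

All exponents of a monomial of degree 18 in five variables are below `2^5`, so its weight vector
satisfies `ω_1 + 2ω_2 + 4ω_3 + 8ω_4 + 16ω_5 = 18` with `ω_t ≤ 5`. Besides the six listed vectors,
this leaves those with `ω_1 = 0`, with `ω_2 = 0`, with `(ω_3, ω_4) = (0, 1)` and with
`(ω_1, ω_2) = (4, 5)`. In each of these cases `x^u` is the largest term of
`Sq^(2^i)(x^(u - 2^i e_j))` for a suitable variable `x_j` (`i = 0, 1, 2, 0` respectively), hence
inadmissible.

In the code the weights are indexed from zero: `ω_t` is `wt m u (t - 1)`.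
-/

open Finset

section Binary

theorem Nat.choose_mod_two (a b : ℕ) :
    a.choose b % 2 = (a % 2).choose (b % 2) * (a / 2).choose (b / 2) % 2 :=
  Choose.choose_modEq_choose_mod_mul_choose_div_nat

theorem Nat.odd_choose_iff_odd_choose_mod_two_and_div_two (a b : ℕ) :
    Odd (a.choose b) ↔ Odd ((a % 2).choose (b % 2)) ∧ Odd ((a / 2).choose (b / 2)) := by
  rw [← Nat.odd_mul, Nat.odd_iff, Nat.odd_iff, Nat.choose_mod_two]

theorem Nat.mod_two_le_of_odd_choose {a b : ℕ} (h : Odd (a.choose b)) : b % 2 ≤ a % 2 := by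
  have h := ((Nat.odd_choose_iff_odd_choose_mod_two_and_div_two a b).1 h).1
  by_contra hlt
  rw [show a % 2 = 0 by omega, show b % 2 = 1 by omega] at h
  simp at h

theorem Nat.choose_two_pow_mod_two (n i : ℕ) : n.choose (2 ^ i) % 2 = n / 2 ^ i % 2 := by
  induction i generalizing n with
  | zero => simp
  | succ i ih =>
    rw [Nat.choose_mod_two, pow_succ, Nat.mul_mod_left, Nat.mul_div_cancel _ two_pos,
      Nat.choose_zero_right, one_mul, ih, Nat.div_div_eq_div_mul, mul_comm]

theorem Nat.eq_sum_two_pow_mul_div_two_pow_mod_two {n T : ℕ} (hn : n < 2 ^ T) :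
    n = ∑ t ∈ range T, 2 ^ t * (n / 2 ^ t % 2) := by
  induction T generalizing n with
  | zero => simp_all
  | succ T ih =>
    have hhalf : n / 2 < 2 ^ T := by rw [pow_succ] at hn; omega
    have hterm : ∀ t, 2 ^ (t + 1) * (n / 2 ^ (t + 1) % 2) = 2 * (2 ^ t * (n / 2 / 2 ^ t % 2)) :=
      fun t => by rw [pow_succ', Nat.div_div_eq_div_mul, mul_assoc]
    rw [sum_range_succ', sum_congr rfl fun t _ => hterm t, ← mul_sum, ← ih hhalf]
    omega

end Binary

section Steenrod

variable {m : ℕ}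

theorem mono_eq_prod (v : Fin m → ℕ) : mono m v = ∏ j, X j ^ v j := by
  rw [mono, monomial_eq, Finsupp.prod_fintype _ _ fun _ => pow_zero _]
  simp

theorem degOf_add (v w : Fin m → ℕ) : degOf m (v + w) = degOf m v + degOf m w :=
  sum_add_distrib

theorem isHomogeneous_mono (v : Fin m → ℕ) : (mono m v).IsHomogeneous (degOf m v) := by
  refine isHomogeneous_monomial _ ?_
  simp [Finsupp.degree_eq_sum, degOf]

theorem Sq_X_pow (j : Fin m) (n : ℕ) :
    Sq m (X j ^ n) = ∑ k ∈ range (n + 1), (n.choose k : P m) * X j ^ (n + k) := by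
  rw [map_pow, Sq, aeval_X, show (X j + X j ^ 2 : P m) = X j * (X j + 1) by ring, mul_pow,
    add_pow, mul_sum]
  exact sum_congr rfl fun k _ => by ring

/-- The exponent vectors `s` for which `x^(g + s)` occurs in `Sq^k(x^g)`. -/
def sqSupport (g : Fin m → ℕ) (k : ℕ) : Finset (Fin m → ℕ) :=
  (Fintype.piFinset fun j => range (g j + 1)).filter
    fun s => degOf m s = k ∧ ∀ j, Odd ((g j).choose (s j))

theorem mem_sqSupport {g s : Fin m → ℕ} {k : ℕ} :
    s ∈ sqSupport g k ↔ degOf m s = k ∧ ∀ j, Odd ((g j).choose (s j)) := by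
  simp only [sqSupport, mem_filter, Fintype.mem_piFinset, mem_range, and_iff_right_iff_imp]
  intro ⟨_, hodd⟩ j
  by_contra hlt
  simpa [Nat.choose_eq_zero_of_lt (by omega : g j < s j)] using hodd j

theorem Sq_mono (g : Fin m → ℕ) :
    Sq m (mono m g) = ∑ s ∈ Fintype.piFinset (fun j => range (g j + 1)),
      (if ∀ j, Odd ((g j).choose (s j)) then mono m (g + s) else 0) := by
  simp only [mono_eq_prod, map_prod, Sq_X_pow, prod_univ_sum, CharTwo.natCast_eq_ite]
  refine sum_congr rfl fun s _ => ?_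
  simp only [← Nat.not_odd_iff_even, ite_not, prod_mul_distrib, Fintype.prod_ite_zero,
    prod_const_one, Pi.add_apply]
  split_ifs <;> simp

theorem homogeneousComponent_mono (n : ℕ) (v : Fin m → ℕ) :
    homogeneousComponent n (mono m v) = if n = degOf m v then mono m v else 0 :=
  homogeneousComponent_of_mem ((mem_homogeneousSubmodule _ _).2 (isHomogeneous_mono v))

theorem homogeneousComponent_Sq_mono (g : Fin m → ℕ) (k : ℕ) :
    homogeneousComponent (degOf m g + k) (Sq m (mono m g)) =
      ∑ s ∈ sqSupport g k, mono m (g + s) := by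
  rw [Sq_mono, map_sum, sqSupport, sum_filter]
  refine sum_congr rfl fun s _ => ?_
  by_cases hodd : ∀ j, Odd ((g j).choose (s j))
  · simp [hodd, homogeneousComponent_mono, degOf_add, eq_comm]
  · simp [hodd]

end Steenrod

section Hit

variable {m : ℕ}

theorem isHit_homogeneousComponent_Sq {n k : ℕ} (hk : k ∈ Icc 1 n) {f : P m}
    (hf : f.IsHomogeneous (n - k)) : IsHit m n (homogeneousComponent n (Sq m f)) := by
  refine ⟨Pi.single k f, fun k' => ?_, ?_⟩
  · rcases eq_or_ne k' k with rfl | h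
    · simpa using hf
    · simpa [h] using isHomogeneous_zero _ _ _
  · rw [sum_eq_single_of_mem k hk fun k' _ h => by simp [h]]
    simp

theorem inadmissible_of_mem_sqSupport {u g s₀ : Fin m → ℕ} {k : ℕ} (hk : 1 ≤ k)
    (hs₀ : s₀ ∈ sqSupport g k) (hu : g + s₀ = u)
    (hlt : ∀ s ∈ sqSupport g k, s ≠ s₀ → monoLt m (g + s) u) :
    Inadmissible m (degOf m u) u := by
  have hdeg : degOf m u = degOf m g + k := by rw [← hu, degOf_add, (mem_sqSupport.1 hs₀).1]
  have hSq : homogeneousComponent (degOf m u) (Sq m (mono m g)) =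
      mono m u + ∑ s ∈ (sqSupport g k).erase s₀, mono m (g + s) := by
    rw [hdeg, homogeneousComponent_Sq_mono, ← add_sum_erase _ _ hs₀, hu]
  refine ⟨((sqSupport g k).erase s₀).image (g + ·), ?_, ?_⟩
  · simp only [mem_image, mem_erase]
    rintro _ ⟨s, ⟨hne, hs⟩, rfl⟩
    exact ⟨by rw [hdeg, degOf_add, (mem_sqSupport.1 hs).1], hlt s hs hne⟩
  · rw [sum_image fun _ _ _ _ => add_left_cancel, CharTwo.sub_eq_add, ← hSq]
    refine isHit_homogeneousComponent_Sq (mem_Icc.2 ⟨hk, by omega⟩) ?_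
    rw [show degOf m u - k = degOf m g by omega]
    exact isHomogeneous_mono g

end Hit

section Weight

variable {m : ℕ}

theorem wt_le (u : Fin m → ℕ) (t : ℕ) : wt m u t ≤ m :=
  calc wt m u t ≤ ∑ _j : Fin m, 1 := sum_le_sum fun _ _ => Nat.le_of_lt_succ (Nat.mod_lt _ two_pos)
    _ = m := by simp

theorem wt_eq_zero_iff {u : Fin m → ℕ} {t : ℕ} : wt m u t = 0 ↔ ∀ j, u j / 2 ^ t % 2 = 0 := by
  simp [wt, sum_eq_zero_iff]

theorem wt_eq_card_iff {u : Fin m → ℕ} {t : ℕ} : wt m u t = m ↔ ∀ j, u j / 2 ^ t % 2 = 1 := by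
  refine ⟨fun h j => ?_, fun h => by simp [wt, h]⟩
  by_contra hj
  have : wt m u t < ∑ _i : Fin m, 1 :=
    sum_lt_sum (fun _ _ => Nat.le_of_lt_succ (Nat.mod_lt _ two_pos)) ⟨j, mem_univ j, by omega⟩
  simp [h] at this

theorem wt_eq_zero_of_lt_two_pow {u : Fin m → ℕ} {T : ℕ} (hu : ∀ j, u j < 2 ^ T) {t : ℕ}
    (ht : T ≤ t) : wt m u t = 0 :=
  wt_eq_zero_iff.2 fun j => by
    rw [Nat.div_eq_of_lt ((hu j).trans_le (Nat.pow_le_pow_right two_pos ht))]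

theorem degOf_eq_sum_wt {u : Fin m → ℕ} {T : ℕ} (hu : ∀ j, u j < 2 ^ T) :
    degOf m u = ∑ t ∈ range T, 2 ^ t * wt m u t := by
  simp only [wt, mul_sum]
  rw [sum_comm, degOf]
  exact sum_congr rfl fun j _ => Nat.eq_sum_two_pow_mul_div_two_pow_mod_two (hu j)

theorem wt_update (u : Fin m → ℕ) (j : Fin m) (a t : ℕ) :
    wt m (Function.update u j a) t + u j / 2 ^ t % 2 = wt m u t + a / 2 ^ t % 2 := by
  have hrest : ∑ i ∈ univ.erase j, Function.update u j a i / 2 ^ t % 2 =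
      ∑ i ∈ univ.erase j, u i / 2 ^ t % 2 :=
    sum_congr rfl fun i hi => by rw [Function.update_of_ne (ne_of_mem_erase hi)]
  simp only [wt, ← add_sum_erase _ _ (mem_univ j), hrest, Function.update_self]
  ring

theorem wt_add_zero_add {g s : Fin m → ℕ} (hodd : ∀ j, Odd ((g j).choose (s j))) :
    wt m (g + s) 0 + wt m s 0 = wt m g 0 := by
  simp only [wt, ← sum_add_distrib]
  refine sum_congr rfl fun j _ => ?_
  have := Nat.mod_two_le_of_odd_choose (hodd j)
  simp only [Pi.add_apply, pow_zero, Nat.div_one]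
  omega

theorem wt_add_one_add {g s : Fin m → ℕ} (hodd : ∀ j, Odd ((g j).choose (s j)))
    (heven : ∀ j, s j % 2 = 0) : wt m (g + s) 1 + wt m s 1 = wt m g 1 := by
  simp only [wt, ← sum_add_distrib]
  refine sum_congr rfl fun j _ => ?_
  have := Nat.mod_two_le_of_odd_choose
    ((Nat.odd_choose_iff_odd_choose_mod_two_and_div_two _ _).1 (hodd j)).2
  have := heven j
  simp only [Pi.add_apply, pow_one]
  omega

theorem monoLt_of_wt_zero_lt {u v : Fin m → ℕ} (h : wt m v 0 < wt m u 0) : monoLt m v u :=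
  Or.inl ⟨0, h, fun _ hs => absurd hs (Nat.not_lt_zero _)⟩

theorem monoLt_of_wt_one_lt {u v : Fin m → ℕ} (h0 : wt m v 0 = wt m u 0)
    (h1 : wt m v 1 < wt m u 1) : monoLt m v u :=
  Or.inl ⟨1, h1, fun s hs => by rwa [Nat.lt_one_iff.1 hs]⟩

end Weight

section Single

variable {m : ℕ}

theorem degOf_single (i : Fin m) (c : ℕ) : degOf m (Pi.single i c) = c := by
  simp [degOf]

theorem apply_le_degOf (u : Fin m → ℕ) (i : Fin m) : u i ≤ degOf m u :=
  single_le_sum (fun _ _ => Nat.zero_le _) (mem_univ i)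

theorem add_le_degOf (u : Fin m → ℕ) {i j : Fin m} (hij : i ≠ j) : u i + u j ≤ degOf m u := by
  rw [← sum_pair hij]
  exact sum_le_sum_of_subset (subset_univ _)

theorem eq_single_of_apply_eq_degOf {s : Fin m → ℕ} {i : Fin m} (hi : s i = degOf m s) :
    s = Pi.single i (s i) := by
  funext j
  rcases eq_or_ne j i with rfl | hj
  · simp
  · have := add_le_degOf s hj
    rw [Pi.single_eq_of_ne hj]
    omega

theorem exists_eq_single_of_degOf_eq {s : Fin m → ℕ} {c : ℕ} (hdeg : degOf m s = c) (hc : 0 < c)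
    (hs : ∀ i, s i ≠ 0 → c ≤ s i) : ∃ i, s = Pi.single i c := by
  obtain ⟨i, hi⟩ : ∃ i, s i ≠ 0 := by
    by_contra! h
    simp [degOf, h] at hdeg
    omega
  have hsi : s i = c := le_antisymm (hdeg ▸ apply_le_degOf s i) (hs i hi)
  exact ⟨i, hsi ▸ eq_single_of_apply_eq_degOf (hsi.trans hdeg.symm)⟩

theorem update_sub_add_single (u : Fin m → ℕ) (j : Fin m) {c : ℕ} (hc : c ≤ u j) :
    Function.update u j (u j - c) + Pi.single j c = u := by
  funext i
  rcases eq_or_ne i j with rfl | h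
  · simp only [Pi.add_apply, Function.update_self, Pi.single_eq_same]
    omega
  · simp [h]

theorem add_single_eq_update (g : Fin m → ℕ) (i : Fin m) (c : ℕ) :
    g + Pi.single i c = Function.update g i (g i + c) := by
  funext j
  rcases eq_or_ne j i with rfl | h <;> simp [*]

theorem single_mem_sqSupport_iff {g : Fin m → ℕ} {i : Fin m} {c : ℕ} :
    Pi.single i c ∈ sqSupport g c ↔ Odd ((g i).choose c) := by
  rw [mem_sqSupport, degOf_single]
  refine ⟨fun h => by simpa using h.2 i, fun h => ⟨rfl, fun j => ?_⟩⟩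
  rcases eq_or_ne j i with rfl | hj
  · simpa using h
  · simp [hj]

theorem mem_sqSupport_one_iff {g s : Fin m → ℕ} :
    s ∈ sqSupport g 1 ↔ ∃ i, Odd (g i) ∧ s = Pi.single i 1 := by
  constructor
  · intro hs
    obtain ⟨i, rfl⟩ := exists_eq_single_of_degOf_eq (mem_sqSupport.1 hs).1 one_pos
      fun i h => Nat.one_le_iff_ne_zero.2 h
    exact ⟨i, by simpa using single_mem_sqSupport_iff.1 hs, rfl⟩
  · rintro ⟨i, hi, rfl⟩
    exact single_mem_sqSupport_iff.2 (by simpa using hi)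

end Single

section Inadmissible

variable {m : ℕ}

theorem inadmissible_of_wt_zero_eq_zero {u : Fin m → ℕ} (hu : u ≠ 0) (h0 : wt m u 0 = 0) :
    Inadmissible m (degOf m u) u := by
  have heven : ∀ i, u i % 2 = 0 := by simpa using wt_eq_zero_iff.1 h0
  obtain ⟨j, hj⟩ : ∃ j, u j ≠ 0 := Function.ne_iff.1 hu
  have := heven j
  refine inadmissible_of_mem_sqSupport le_rfl (single_mem_sqSupport_iff.2 ?_)
    (update_sub_add_single u j (by omega : 1 ≤ u j)) fun s hs hne => ?_
  · rw [Function.update_self, Nat.choose_one_right, Nat.odd_iff]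
    omega
  · obtain ⟨i, hi, rfl⟩ := mem_sqSupport_one_iff.1 hs
    have hij : i ≠ j := by rintro rfl; exact absurd rfl hne
    rw [Function.update_of_ne hij, Nat.odd_iff, heven i] at hi
    exact absurd hi zero_ne_one

theorem inadmissible_of_mod_four_eq_two {u : Fin m → ℕ} {j : Fin m} (hj : u j % 4 = 2)
    (hodd : ∀ i, u i % 2 = 1 → u i % 4 = 3) : Inadmissible m (degOf m u) u := by
  refine inadmissible_of_mem_sqSupport le_rfl (single_mem_sqSupport_iff.2 ?_)
    (update_sub_add_single u j (by omega : 1 ≤ u j)) fun s hs hne => ?_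
  · rw [Function.update_self, Nat.choose_one_right, Nat.odd_iff]
    omega
  obtain ⟨i, hi, rfl⟩ := mem_sqSupport_one_iff.1 hs
  have hij : i ≠ j := by rintro rfl; exact absurd rfl hne
  rw [Function.update_of_ne hij, Nat.odd_iff] at hi
  have hi3 := hodd i hi
  -- `u ↦ u - e_j + e_i` keeps `ω_1` and lowers `ω_2` by two since `u_i ≡ 3`, `u_j ≡ 2 (mod 4)`.
  have hwt : ∀ t, wt m (Function.update u j (u j - 1) + Pi.single i 1) t
      + u i / 2 ^ t % 2 + u j / 2 ^ t % 2 =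
        wt m u t + (u i + 1) / 2 ^ t % 2 + (u j - 1) / 2 ^ t % 2 := by
    intro t
    have h1 := wt_update u j (u j - 1) t
    have h2 := wt_update (Function.update u j (u j - 1)) i (u i + 1) t
    rw [Function.update_of_ne hij] at h2
    rw [add_single_eq_update, Function.update_of_ne hij]
    omega
  have h0 := hwt 0
  have h1 := hwt 1
  simp only [pow_zero, Nat.div_one, pow_one] at h0 h1
  exact monoLt_of_wt_one_lt (by omega) (by omega)

theorem inadmissible_of_wt_one_eq_zero {u : Fin m → ℕ} {j : Fin m} (hj : 4 ≤ u j)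
    (h1 : wt m u 1 = 0) : Inadmissible m (degOf m u) u := by
  have hbit : ∀ i, u i / 2 % 2 = 0 := by simpa using wt_eq_zero_iff.1 h1
  have hchoose (n : ℕ) : n.choose 2 % 2 = n / 2 % 2 := Nat.choose_two_pow_mod_two n 1
  refine inadmissible_of_mem_sqSupport (by norm_num) (single_mem_sqSupport_iff.2 ?_)
    (update_sub_add_single u j (by omega : 2 ≤ u j)) fun s hs hne => ?_
  · rw [Function.update_self, Nat.odd_iff, hchoose]
    have := hbit j
    omega
  obtain ⟨hdeg, hodd⟩ := mem_sqSupport.1 hs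
  have hsum := wt_add_zero_add hodd
  have hg := wt_update u j (u j - 2) 0
  simp only [pow_zero, Nat.div_one] at hg
  rcases Nat.eq_zero_or_pos (wt m s 0) with hs0 | hs0
  · have heven : ∀ i, s i % 2 = 0 := by simpa using wt_eq_zero_iff.1 hs0
    obtain ⟨i, rfl⟩ := exists_eq_single_of_degOf_eq hdeg two_pos fun i h => by
      have := heven i
      omega
    have hij : i ≠ j := by rintro rfl; exact absurd rfl hne
    have := hodd i
    rw [Pi.single_eq_same, Function.update_of_ne hij, Nat.odd_iff, hchoose, hbit i] at this
    exact absurd this zero_ne_one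
  · exact monoLt_of_wt_zero_lt (by omega)

theorem inadmissible_of_div_four_mod_four_eq_two {u : Fin m → ℕ} {d : Fin m}
    (hd : u d / 4 % 4 = 2) (hsmall : ∀ j, j ≠ d → u j < 4) : Inadmissible m (degOf m u) u := by
  refine inadmissible_of_mem_sqSupport (by norm_num) (single_mem_sqSupport_iff.2 ?_)
    (update_sub_add_single u d (by omega : 4 ≤ u d)) fun s hs hne => ?_
  · rw [Function.update_self, Nat.odd_iff, show 4 = 2 ^ 2 by rfl, Nat.choose_two_pow_mod_two]
    omega
  obtain ⟨hdeg, hodd⟩ := mem_sqSupport.1 hs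
  have hsum0 := wt_add_zero_add hodd
  have hg0 := wt_update u d (u d - 4) 0
  have hg1 := wt_update u d (u d - 4) 1
  simp only [pow_zero, Nat.div_one, pow_one] at hg0 hg1
  rcases Nat.eq_zero_or_pos (wt m s 0) with hs0 | hs0
  · have heven : ∀ i, s i % 2 = 0 := by simpa using wt_eq_zero_iff.1 hs0
    have hsd : s d ≠ 4 := fun h => hne (by
      rw [eq_single_of_apply_eq_degOf (h.trans hdeg.symm), h])
    have hs02 : ∀ i, s i = 0 ∨ s i = 2 := fun i => by
      have := heven i
      rcases eq_or_ne i d with rfl | hid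
      · have := apply_le_degOf s i
        omega
      · have hle : s i ≤ u i := by
          by_contra! hlt
          have := hodd i
          rw [Function.update_of_ne hid, Nat.choose_eq_zero_of_lt hlt] at this
          exact Nat.not_odd_zero this
        have := hsmall i hid
        omega
    have hs1 : 2 * wt m s 1 = degOf m s := by
      rw [wt, mul_sum, degOf]
      exact sum_congr rfl fun i _ => by rcases hs02 i with h | h <;> simp [h]
    have hsum1 := wt_add_one_add hodd heven
    exact monoLt_of_wt_one_lt (by omega) (by omega)
  · exact monoLt_of_wt_zero_lt (by omega)

end Inadmissible

section WeightConditions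

variable {m : ℕ}

theorem exists_four_le_of_wt_one_eq_zero {u : Fin m → ℕ} (h1 : wt m u 1 = 0)
    (hdeg : m < degOf m u) : ∃ j, 4 ≤ u j := by
  by_contra! h
  have hbit : ∀ i, u i / 2 % 2 = 0 := by simpa using wt_eq_zero_iff.1 h1
  have : degOf m u ≤ ∑ _j : Fin m, 1 := sum_le_sum fun i _ => by
    have := hbit i
    have := h i
    omega
  simp at this
  omega

theorem exists_div_four_mod_four_eq_two {u : Fin m → ℕ} (h2 : wt m u 2 = 0) (h3 : wt m u 3 = 1)
    (hdeg : degOf m u < 24) : ∃ d, u d / 4 % 4 = 2 ∧ ∀ j, j ≠ d → u j < 4 := by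
  have hbit2 : ∀ i, u i / 4 % 2 = 0 := by simpa using wt_eq_zero_iff.1 h2
  obtain ⟨d, hd⟩ := exists_eq_single_of_degOf_eq (s := fun i => u i / 8 % 2)
    (by simpa [wt, degOf] using h3) one_pos fun i h => by omega
  have hbit3d : u d / 8 % 2 = 1 := by simpa using congrFun hd d
  have := apply_le_degOf u d
  have := hbit2 d
  refine ⟨d, by omega, fun j hj => ?_⟩
  have : u j / 8 % 2 = 0 := by simpa [hj] using congrFun hd j
  have := add_le_degOf u hj
  have := hbit2 j
  omega

theorem exists_mod_four_eq_two {u : Fin m → ℕ} (h0 : wt m u 0 < m) (h1 : wt m u 1 = m) :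
    ∃ j, u j % 4 = 2 ∧ ∀ i, u i % 2 = 1 → u i % 4 = 3 := by
  have hbit1 : ∀ i, u i / 2 % 2 = 1 := by simpa using wt_eq_card_iff.1 h1
  obtain ⟨j, hj⟩ : ∃ j, u j % 2 ≠ 1 := by
    by_contra! h
    exact h0.ne (wt_eq_card_iff.2 (by simpa using h))
  have := hbit1 j
  exact ⟨j, by omega, fun i hi => by have := hbit1 i; omega⟩

end WeightConditions

theorem eq_wvec_of_sum_eq_eighteen {w : ℕ → ℕ} (hw : ∀ t, 5 ≤ t → w t = 0) (h0 : w 0 ≤ 5)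
    (h1 : w 1 ≤ 5) (hsum : w 0 + 2 * w 1 + 4 * w 2 + 8 * w 3 + 16 * w 4 = 18) (hw0 : w 0 ≠ 0)
    (hw1 : w 1 ≠ 0) (hw23 : ¬(w 2 = 0 ∧ w 3 = 1)) (hw01 : ¬(w 0 = 4 ∧ w 1 = 5)) :
    w = wvec [2, 2, 1, 1] ∨ w = wvec [2, 2, 3] ∨ w = wvec [2, 4, 2] ∨
    w = wvec [4, 1, 1, 1] ∨ w = wvec [4, 1, 3] ∨ w = wvec [4, 3, 2] := by
  have hext (l : List ℕ) (hl : l.length ≤ 5) : w = wvec l ↔ ∀ t < 5, w t = l.getD t 0 :=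
    ⟨fun h t _ => by rw [h, wvec], fun h => funext fun t => if ht : t < 5 then h t ht else by
      rw [hw t (by omega), wvec, List.getD_eq_default _ _ (by omega)]⟩
  simp (disch := simp) only [hext]
  simp only [Nat.forall_lt_succ_left, Nat.not_lt_zero, List.getD_cons_zero,
    List.getD_cons_succ, List.getD_nil, zero_add, Nat.reduceAdd, IsEmpty.forall_iff,
    forall_const, and_true]
  generalize w 0 = a, w 1 = b, w 2 = c, w 3 = d, w 4 = e at *
  obtain rfl : e = 0 := by omega
  obtain rfl | rfl : a = 2 ∨ a = 4 := by omega
  · obtain ⟨rfl, rfl, rfl⟩ | ⟨rfl, rfl, rfl⟩ | ⟨rfl, rfl, rfl⟩ :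
        b = 2 ∧ c = 1 ∧ d = 1 ∨ b = 2 ∧ c = 3 ∧ d = 0 ∨ b = 4 ∧ c = 2 ∧ d = 0 := by omega
    all_goals simp
  · obtain ⟨rfl, rfl, rfl⟩ | ⟨rfl, rfl, rfl⟩ | ⟨rfl, rfl, rfl⟩ :
        b = 1 ∧ c = 1 ∧ d = 1 ∨ b = 1 ∧ c = 3 ∧ d = 0 ∨ b = 3 ∧ c = 2 ∧ d = 0 := by omega
    all_goals simp

/-- The weight vector of any admissible monomial of degree 18 in `P 5` is
one of `(2,2,1,1)`, `(2,2,3)`, `(2,4,2)`, `(4,1,1,1)`, `(4,1,3)`, `(4,3,2)`. -/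
theorem stmt_5 (u : Fin 5 → ℕ) (hadm : Admissible 5 18 u) :
    wt 5 u = wvec [2, 2, 1, 1] ∨ wt 5 u = wvec [2, 2, 3] ∨ wt 5 u = wvec [2, 4, 2] ∨
    wt 5 u = wvec [4, 1, 1, 1] ∨ wt 5 u = wvec [4, 1, 3] ∨ wt 5 u = wvec [4, 3, 2] := by
  obtain ⟨hdeg, hadm⟩ := hadm
  have hlt : ∀ j, u j < 2 ^ 5 := fun j => by have := apply_le_degOf u j; omega
  have hsum := degOf_eq_sum_wt hlt
  norm_num [sum_range_succ] at hsum
  refine eq_wvec_of_sum_eq_eighteen (fun t => wt_eq_zero_of_lt_two_pow hlt) (wt_le u 0)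
    (wt_le u 1) (by omega) (fun h0 => ?_) (fun h1 => ?_) (fun ⟨h2, h3⟩ => ?_) (fun ⟨h0, h1⟩ => ?_)
  · exact hadm (hdeg ▸ inadmissible_of_wt_zero_eq_zero (by rintro rfl; simp [degOf] at hdeg) h0)
  · obtain ⟨j, hj⟩ := exists_four_le_of_wt_one_eq_zero h1 (by omega)
    exact hadm (hdeg ▸ inadmissible_of_wt_one_eq_zero hj h1)
  · obtain ⟨d, hd, hsmall⟩ := exists_div_four_mod_four_eq_two h2 h3 (by omega)
    exact hadm (hdeg ▸ inadmissible_of_div_four_mod_four_eq_two hd hsmall)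
  · obtain ⟨j, hj, hodd⟩ := exists_mod_four_eq_two (by omega) h1
    exact hadm (hdeg ▸ inadmissible_of_mod_four_eq_two hj hodd)
end

section
/- For every integer t ≥ 2, ξ(23·2^t − 5) = 5; that is, the number n_t = 5(2^t − 1) + 18·2^t = 23·2^t − 5 can be written as a sum of five (but not fewer) numbers of the form 2^d − 1 with d ≥ 1. -/
open MvPolynomial

/-!
If `n = ∑_{i < γ} (2^{d_i} - 1)` with `γ ≤ 4`, then `n + 4 = ∑_{i < γ} 2^{d_i} + (4 - γ)` is a sum
of four powers of two, so its binary digit sum is at most `4`: digit sums are subadditive, which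
follows from Legendre's formula `(p - 1) v_p(a!) = a - s_p(a)` and `a! b! ∣ (a + b)!`. But
`n + 4 = 23·2^t - 1 = (2^t - 1) + 2^t·22` has binary digit sum `t + 3 ≥ 5`. Five terms suffice:
`n = (2^{t+4} - 1) + (2^{t+2} - 1) + (2^{t+1} - 1) + 2 (2^{t-1} - 1)`.
-/

open Nat

theorem Nat.digits_sum_add_le {p : ℕ} [Fact p.Prime] (a b : ℕ) :
    (p.digits (a + b)).sum ≤ (p.digits a).sum + (p.digits b).sum := by
  have hval : padicValNat p (a ! * b !) ≤ padicValNat p (a + b)! :=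
    (padicValNat_dvd_iff_le (factorial_ne_zero _)).mp
      (pow_padicValNat_dvd.trans (factorial_mul_factorial_dvd_factorial_add a b))
  have hlegendre := Nat.mul_le_mul_left (p - 1) hval
  rw [padicValNat.mul (factorial_ne_zero a) (factorial_ne_zero b), Nat.mul_add,
    sub_one_mul_padicValNat_factorial, sub_one_mul_padicValNat_factorial,
    sub_one_mul_padicValNat_factorial] at hlegendre
  have := digit_sum_le p a
  have := digit_sum_le p b
  have := digit_sum_le p (a + b)
  omega

theorem Nat.digits_sum_pow {b : ℕ} (hb : 1 < b) (d : ℕ) : (b.digits (b ^ d)).sum = 1 := by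
  simpa [digits_of_lt b 1 one_ne_zero hb] using
    congrArg List.sum (digits_base_pow_mul hb one_pos (k := d))

theorem Nat.digits_sum_sum_pow_le {p : ℕ} [Fact p.Prime] {ι : Type*} (s : Finset ι)
    (d : ι → ℕ) : (p.digits (∑ i ∈ s, p ^ d i)).sum ≤ s.card := by
  simpa [Nat.digits_sum_pow (Fact.out : p.Prime).one_lt] using
    Finset.le_sum_of_subadditive (fun n => (p.digits n).sum) (by simp) Nat.digits_sum_add_le s
      (fun i => p ^ d i)

theorem Nat.digits_pow_sub_one {b : ℕ} (hb : 1 < b) (t : ℕ) :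
    b.digits (b ^ t - 1) = List.replicate t (b - 1) := by
  induction t with
  | zero => simp
  | succ t ih =>
    obtain ⟨y, hy⟩ := Nat.exists_eq_add_of_le' (Nat.one_le_pow t b (by omega))
    have hsplit : b ^ (t + 1) - 1 = (b - 1) + b * (b ^ t - 1) := by
      rw [pow_succ, hy, Nat.add_sub_cancel, add_mul, one_mul, mul_comm y b]
      omega
    rw [hsplit, digits_add b hb _ _ (by omega) (by omega), ih, List.replicate_succ]

theorem Nat.digits_sum_pow_sub_one_add_pow_mul {b : ℕ} (hb : 1 < b) (t m : ℕ) :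
    (b.digits (b ^ t - 1 + b ^ t * m)).sum = t * (b - 1) + (b.digits m).sum := by
  have h := digits_append_digits (b := b) (n := b ^ t - 1) (m := m) (by omega)
  rw [digits_pow_sub_one hb, List.length_replicate, ← digits_pow_sub_one hb] at h
  rw [← h, List.sum_append, digits_pow_sub_one hb, List.sum_replicate, smul_eq_mul]

theorem Nat.digits_sum_add_le_of_eq_sum_pow_sub_one {p γ k m : ℕ} [Fact p.Prime]
    {d : Fin γ → ℕ} (hm : m = ∑ i, (p ^ d i - 1)) (hk : γ ≤ k) :
    (p.digits (m + k)).sum ≤ k := by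
  have hsplit : m + k = ∑ i, p ^ d i + (k - γ) := by
    have hsucc : ∀ i, p ^ d i - 1 + 1 = p ^ d i := fun i =>
      Nat.sub_add_cancel (Nat.one_le_pow _ _ (Fact.out : p.Prime).pos)
    rw [hm, ← Finset.sum_congr rfl fun i _ => hsucc i, Finset.sum_add_distrib]
    simp only [Finset.sum_const, Finset.card_univ, Fintype.card_fin, smul_eq_mul, mul_one]
    omega
  calc (p.digits (m + k)).sum
      ≤ (p.digits (∑ i, p ^ d i)).sum + (p.digits (k - γ)).sum := by
        rw [hsplit]; exact Nat.digits_sum_add_le _ _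
    _ ≤ γ + (k - γ) := by
        gcongr
        · simpa using Nat.digits_sum_sum_pow_le Finset.univ d
        · exact digit_sum_le p _
    _ = k := by omega

/-- For every `t ≥ 2`, `ξ(23·2^t − 5) = 5`: the number
`n_t = 5(2^t − 1) + 18·2^t = 23·2^t − 5` is a sum of five, but not fewer, numbers of
the form `2^d − 1` with `d ≥ 1`. -/
theorem stmt_12 (t : ℕ) (ht : 2 ≤ t) :
    IsLeast {γ : ℕ | ∃ d : Fin γ → ℕ, (∀ i, 0 < d i) ∧
      23 * 2 ^ t - 5 = ∑ i, (2 ^ d i - 1)} 5 := by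
  have h4 : 4 ≤ 2 ^ t := by simpa using Nat.pow_le_pow_right two_pos ht
  refine ⟨?_, fun γ ⟨d, _, hsum⟩ => ?_⟩
  · obtain ⟨s, rfl⟩ : ∃ s, t = s + 1 := ⟨t - 1, by omega⟩
    refine ⟨![s + 5, s + 3, s + 2, s, s], ?_, ?_⟩
    · intro i
      fin_cases i <;> simp <;> omega
    · simp only [Fin.sum_univ_five, Matrix.cons_val_zero, Matrix.cons_val_one, Matrix.cons_val,
        pow_add] at h4 ⊢
      omega
  · by_contra! hγ
    have hle := Nat.digits_sum_add_le_of_eq_sum_pow_sub_one (p := 2) hsum (k := 4) (by omega)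
    have hbinary : 23 * 2 ^ t - 5 + 4 = 2 ^ t - 1 + 2 ^ t * 22 := by omega
    have h22 : (digits 2 22).sum = 3 := by norm_num
    rw [hbinary, Nat.digits_sum_pow_sub_one_add_pow_mul one_lt_two, h22] at hle
    omega
end
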